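/- arXiv:1805.10083 — 3 statements merged into one kernel-verified Lean document; each statement's English description precedes it below -/
import Mathlib

section
/- Let T be a tree with order p and diameter d ≥ 2, and let ε = ε(T). Then the radio number of T satisfies rn(T) ≥ (p-1)(d+ε) - 2L(T) + ε. -/
/-!
Sort the vertices by label as `u₀, …, u_{p-1}`. The radio condition gives
`f(u_{i+1}) - f(u_i) ≥ diam + 1 - d(u_i, u_{i+1})`, and in a tree
`d(u, v) ≤ L(u) + L(v) + 1 - ε`, because two weight centers are equal or adjacent: the weight is
strictly convex along paths (`2 w(b) + 2 ≤ w(a) + w(d)` for a path `a - b - d`, since at most one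
neighbour of `b` is closer to a given vertex). Summing over the `p - 1` consecutive pairs counts
every level twice except those of `u₀` and `u_{p-1}`, whose sum is at least `ε`.
-/

namespace Radio

variable {V : Type*}

/-- The span of a labeling `f`: the maximum of `|f u - f v|` over all pairs of vertices. -/
def span [Fintype V] (f : V → ℕ) : ℕ :=
  Finset.univ.sup fun p : V × V => ((f p.1 : ℤ) - (f p.2 : ℤ)).natAbs

/-- `f` is a radio labeling of `G`: `|f u - f v| ≥ diam G + 1 - d(u,v)` for all distinct `u, v`. -/
def IsRadioLabeling [Fintype V] (G : SimpleGraph V) (f : V → ℕ) : Prop :=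
  ∀ u v : V, u ≠ v → G.diam + 1 ≤ G.dist u v + ((f u : ℤ) - (f v : ℤ)).natAbs

/-- The radio number of `G`: the minimum span of a radio labeling of `G`. -/
noncomputable def radioNumber [Fintype V] (G : SimpleGraph V) : ℕ :=
  sInf { n | ∃ f : V → ℕ, IsRadioLabeling G f ∧ span f = n }

/-- The weight of `G` from a vertex `v`: `w_G(v) = ∑_u d(u, v)`. -/
noncomputable def weightFrom [Fintype V] (G : SimpleGraph V) (v : V) : ℕ :=
  ∑ u : V, G.dist u v

/-- The weight of `G`: the minimum of `w_G(v)` over all vertices `v`. -/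
noncomputable def weight [Fintype V] (G : SimpleGraph V) : ℕ :=
  sInf (Set.range (weightFrom G))

/-- The set of weight centers of `G`: vertices minimizing `w_G(·)`. -/
def weightCenters [Fintype V] (G : SimpleGraph V) : Set V :=
  { v | ∀ x : V, weightFrom G v ≤ weightFrom G x }

/-- The level of a vertex `u`: `L(u) = min { d(u, x) : x ∈ W(G) }`. -/
noncomputable def level [Fintype V] (G : SimpleGraph V) (u : V) : ℕ :=
  sInf (G.dist u '' weightCenters G)

/-- The total level of `G`: `L(G) = ∑_u L(u)`. -/
noncomputable def totalLevel [Fintype V] (G : SimpleGraph V) : ℕ :=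
  ∑ u : V, level G u

/-- `ε(G) = 1` if `G` has exactly one weight center, and `0` otherwise
(for a tree the other case is exactly that of two adjacent weight centers). -/
noncomputable def epsilon [Fintype V] (G : SimpleGraph V) : ℕ :=
  if (weightCenters G).ncard = 1 then 1 else 0

end Radio

theorem Fin.sum_succ_sub_castSucc {M : Type*} [AddCommGroup M] {n : ℕ} (g : Fin (n + 1) → M) :
    ∑ i : Fin n, (g i.succ - g i.castSucc) = g (Fin.last n) - g 0 := by
  rw [Finset.sum_sub_distrib, sub_eq_sub_iff_add_eq_add, add_comm, ← Fin.sum_univ_succ,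
    Fin.sum_univ_castSucc, add_comm]

theorem Fin.mul_le_of_forall_castSucc_succ {n : ℕ} (g b : Fin (n + 1) → ℤ) (c : ℤ)
    (h : ∀ i : Fin n, c ≤ b i.castSucc + b i.succ + (g i.succ - g i.castSucc)) :
    n * c ≤ 2 * ∑ i, b i - b 0 - b (Fin.last n) + (g (Fin.last n) - g 0) := by
  have hsum := Finset.sum_le_sum fun i (_ : i ∈ Finset.univ) => h i
  rw [Finset.sum_const, Finset.card_univ, Fintype.card_fin, nsmul_eq_mul,
    Finset.sum_add_distrib, Finset.sum_add_distrib, Fin.sum_succ_sub_castSucc] at hsum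
  linarith [Fin.sum_univ_succ b, Fin.sum_univ_castSucc b]

theorem Fintype.exists_equiv_fin_monotone {V α : Type*} [Fintype V] [LinearOrder α] (f : V → α)
    {n : ℕ} (hn : Fintype.card V = n) : ∃ e : Fin n ≃ V, Monotone (f ∘ e) := by
  let e₀ : Fin n ≃ V := (Fintype.equivFinOfCardEq hn).symm
  exact ⟨(Tuple.sort (f ∘ e₀)).trans e₀, Tuple.monotone_sort (f ∘ e₀)⟩

theorem add_two_mul_le_sub_of_two_le_second_diff (h : ℕ → ℤ) {k : ℕ}
    (hconv : ∀ i, i + 2 ≤ k → 2 * h (i + 1) + 2 ≤ h i + h (i + 2)) {j : ℕ} (hj : j < k) :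
    h 1 - h 0 + 2 * j ≤ h (j + 1) - h j := by
  induction j with
  | zero => simp
  | succ j ih =>
    have := hconv j hj
    push_cast
    linarith [ih (by omega)]

namespace SimpleGraph

variable {V : Type*} {G : SimpleGraph V}

theorem IsTree.eq_of_adj_of_dist_lt (hT : G.IsTree) {y a b d : V} (ha : G.Adj a b)
    (hd : G.Adj d b) (hya : G.dist y a < G.dist y b) (hyd : G.dist y d < G.dist y b) :
    a = d := by
  -- both `a` and `d` are the penultimate vertex of the unique path from `y` to `b`
  have concat_isPath : ∀ {x}, (hx : G.Adj x b) → G.dist y x < G.dist y b →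
      ∃ p : G.Walk y x, (p.concat hx).IsPath := by
    intro x hx hlt
    obtain ⟨p, -, hp⟩ := (hT.connected y x).exists_path_of_dist
    refine ⟨p, (p.concat hx).isPath_of_length_eq_dist ?_⟩
    have := hT.dist_eq_dist_add_one_of_adj y hx
    rw [Walk.length_concat, hp]
    omega
  obtain ⟨p, hp⟩ := concat_isPath ha hya
  obtain ⟨q, hq⟩ := concat_isPath hd hyd
  simpa [Walk.penultimate_concat] using
    congrArg Walk.penultimate ((hT.existsUnique_path y b).unique hp hq)

theorem IsTree.two_mul_dist_le_dist_add_dist (hT : G.IsTree) {a b d : V} (hab : G.Adj a b)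
    (hbd : G.Adj b d) (had : a ≠ d) (u : V) : 2 * G.dist u b ≤ G.dist u a + G.dist u d := by
  have h₁ := hT.dist_eq_dist_add_one_of_adj u hab
  have h₂ := hT.dist_eq_dist_add_one_of_adj u hbd
  have : ¬ (G.dist u a < G.dist u b ∧ G.dist u d < G.dist u b) :=
    fun h => had (hT.eq_of_adj_of_dist_lt hab hbd.symm h.1 h.2)
  omega

end SimpleGraph

namespace Radio

variable {V : Type*} [Fintype V] {G : SimpleGraph V}

theorem sub_le_span (f : V → ℕ) (u v : V) : (f u : ℤ) - f v ≤ span f :=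
  Int.le_natAbs.trans <| Nat.cast_le.mpr <|
    Finset.le_sup (f := fun p : V × V => ((f p.1 : ℤ) - (f p.2 : ℤ)).natAbs)
      (Finset.mem_univ (u, v))

/-- Listing the vertices by increasing label, consecutive labels differ by at least
`c - b u - b v`; summing these gaps bounds `f last - f first`. -/
theorem le_span_of_forall_ne [Nontrivial V] (f : V → ℕ) (b : V → ℤ) (c ε : ℤ)
    (hgap : ∀ u v, u ≠ v → c ≤ b u + b v + |(f u : ℤ) - f v|)
    (hε : ∀ u v, u ≠ v → ε ≤ b u + b v) :
    ((Fintype.card V : ℤ) - 1) * c - 2 * ∑ v, b v + ε ≤ span f := by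
  obtain ⟨n, hn⟩ : ∃ n, Fintype.card V = n + 1 :=
    ⟨_, (Nat.succ_pred_eq_of_pos Fintype.card_pos).symm⟩
  obtain ⟨e, he⟩ := Fintype.exists_equiv_fin_monotone f hn
  have hends : (0 : Fin (n + 1)) ≠ Fin.last n := by
    have := Fintype.one_lt_card (α := V)
    exact Fin.ne_of_lt (Fin.lt_def.mpr (by simp; omega))
  have hconsec : ∀ i : Fin n, c ≤ b (e i.castSucc) + b (e i.succ)
      + ((f (e i.succ) : ℤ) - f (e i.castSucc)) := by
    intro i
    have hle : f (e i.castSucc) ≤ f (e i.succ) := he (Fin.castSucc_le_succ i)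
    have := hgap _ _ (e.injective.ne (Fin.castSucc_lt_succ (i := i)).ne)
    rwa [abs_sub_comm, abs_of_nonneg (by omega)] at this
  have hsum := Fin.mul_le_of_forall_castSucc_succ (fun i => (f (e i) : ℤ)) (b ∘ e) c hconsec
  rw [Function.comp_def, Equiv.sum_comp e b] at hsum
  push_cast [hn]
  linarith [hε _ _ (e.injective.ne hends), sub_le_span f (e (Fin.last n)) (e 0)]

theorem exists_isRadioLabeling (G : SimpleGraph V) : ∃ f, IsRadioLabeling G f := by
  refine ⟨fun v => (G.diam + 1) * Fintype.equivFin V v, fun u v huv => ?_⟩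
  have hne : ((Fintype.equivFin V u : ℤ) - Fintype.equivFin V v).natAbs ≠ 0 := by
    simpa [sub_eq_zero, Fin.val_eq_val] using huv
  rw [Nat.cast_mul, Nat.cast_mul, ← mul_sub, Int.natAbs_mul, Int.natAbs_natCast]
  have := Nat.le_mul_of_pos_right (G.diam + 1) (Nat.pos_of_ne_zero hne)
  omega

theorem exists_isRadioLabeling_span_eq_radioNumber (G : SimpleGraph V) :
    ∃ f, IsRadioLabeling G f ∧ span f = radioNumber G := by
  obtain ⟨f, hf⟩ := exists_isRadioLabeling G
  exact Nat.sInf_mem (s := {n | ∃ f, IsRadioLabeling G f ∧ span f = n}) ⟨_, f, hf, rfl⟩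

theorem two_mul_weightFrom_add_two_le (hT : G.IsTree) {a b d : V} (hab : G.Adj a b)
    (hbd : G.Adj b d) (had : a ≠ d) : 2 * weightFrom G b + 2 ≤ weightFrom G a + weightFrom G d := by
  classical
  have hsum := Finset.sum_le_sum fun u (_ : u ∈ Finset.univ.erase b) =>
    hT.two_mul_dist_le_dist_add_dist hab hbd had u
  rw [← Finset.mul_sum, Finset.sum_add_distrib] at hsum
  unfold weightFrom
  rw [← Finset.add_sum_erase _ _ (Finset.mem_univ b), ← Finset.add_sum_erase _ _ (Finset.mem_univ b),
    ← Finset.add_sum_erase _ (fun u => G.dist u d) (Finset.mem_univ b), SimpleGraph.dist_self,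
    SimpleGraph.dist_eq_one_iff_adj.mpr hab.symm, SimpleGraph.dist_eq_one_iff_adj.mpr hbd]
  omega

theorem dist_le_one_of_mem_weightCenters (hT : G.IsTree) {w w' : V} (hw : w ∈ weightCenters G)
    (hw' : w' ∈ weightCenters G) : G.dist w w' ≤ 1 := by
  by_contra! hlt
  obtain ⟨P, hP, hPl⟩ := (hT.connected w w').exists_path_of_dist
  let h : ℕ → ℤ := fun i => weightFrom G (P.getVert i)
  have hconv : ∀ i, i + 2 ≤ P.length → 2 * h (i + 1) + 2 ≤ h i + h (i + 2) := by
    intro i hi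
    have hne : P.getVert i ≠ P.getVert (i + 2) := fun heq => by
      have := hP.getVert_injOn (by simp; omega) (by simp; omega) heq
      omega
    show (2 : ℤ) * weightFrom G (P.getVert (i + 1)) + 2
      ≤ weightFrom G (P.getVert i) + weightFrom G (P.getVert (i + 1 + 1))
    exact_mod_cast two_mul_weightFrom_add_two_le hT (P.adj_getVert_succ (by omega))
      (P.adj_getVert_succ (by omega)) hne
  have hincr := add_two_mul_le_sub_of_two_le_second_diff h hconv (j := P.length - 1) (by omega)
  have hstart : h 0 ≤ h 1 := by simpa [h] using hw (P.getVert 1)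
  have hend : h P.length ≤ h (P.length - 1) := by simpa [h] using hw' (P.getVert (P.length - 1))
  rw [Nat.sub_add_cancel (by omega)] at hincr
  omega

theorem dist_add_epsilon_le_one (hT : G.IsTree) {w w' : V} (hw : w ∈ weightCenters G)
    (hw' : w' ∈ weightCenters G) : G.dist w w' + epsilon G ≤ 1 := by
  unfold epsilon
  split_ifs with h
  · obtain ⟨c, hc⟩ := Set.ncard_eq_one.mp h
    rw [hc] at hw hw'
    simp_all
  · exact dist_le_one_of_mem_weightCenters hT hw hw'

theorem weightCenters_nonempty [Nonempty V] (G : SimpleGraph V) : (weightCenters G).Nonempty :=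
  let ⟨v, _, hv⟩ := Finset.exists_min_image Finset.univ (weightFrom G) Finset.univ_nonempty
  ⟨v, fun x => hv x (Finset.mem_univ x)⟩

theorem exists_mem_weightCenters_dist_eq_level [Nonempty V] (G : SimpleGraph V) (u : V) :
    ∃ w ∈ weightCenters G, G.dist u w = level G u :=
  Nat.sInf_mem ((weightCenters_nonempty G).image _)

theorem dist_add_epsilon_le_level_add_level (hT : G.IsTree) (u v : V) :
    G.dist u v + epsilon G ≤ level G u + level G v + 1 := by
  have := hT.connected.nonempty
  obtain ⟨wu, hwu, hu⟩ := exists_mem_weightCenters_dist_eq_level G u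
  obtain ⟨wv, hwv, hv⟩ := exists_mem_weightCenters_dist_eq_level G v
  have h₁ := hT.connected.dist_triangle (u := u) (v := wu) (w := v)
  have h₂ := hT.connected.dist_triangle (u := wu) (v := wv) (w := v)
  have := dist_add_epsilon_le_one hT hwu hwv
  rw [SimpleGraph.dist_comm (u := wv)] at h₂
  omega

/-- Bantva–Vaidya–Zhou lower bound.
Let `T` be a tree with order `p` and diameter `d ≥ 2`, and `ε = ε(T)`.
Then `rn(T) ≥ (p-1)(d+ε) - 2 L(T) + ε`. -/
theorem radioNumber_tree_lower_bound {V : Type*} [Fintype V]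
    (G : SimpleGraph V) (hT : G.IsTree) (hd : 2 ≤ G.diam) :
    ((Fintype.card V : ℤ) - 1) * ((G.diam : ℤ) + (epsilon G : ℤ))
        - 2 * (totalLevel G : ℤ) + (epsilon G : ℤ)
      ≤ (radioNumber G : ℤ) := by
  have : Nontrivial V := SimpleGraph.nontrivial_of_diam_ne_zero (G := G) (by omega)
  obtain ⟨f, hf, hspan⟩ := exists_isRadioLabeling_span_eq_radioNumber G
  have hlevel := dist_add_epsilon_le_level_add_level hT
  have hgap : ∀ u v, u ≠ v →
      (G.diam : ℤ) + epsilon G ≤ level G u + level G v + |(f u : ℤ) - f v| := by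
    intro u v huv
    have := hf u v huv
    have := hlevel u v
    rw [← Int.natCast_natAbs]
    omega
  have hends : ∀ u v, u ≠ v → (epsilon G : ℤ) ≤ level G u + level G v := by
    intro u v huv
    have := hT.connected.pos_dist_of_ne huv
    have := hlevel u v
    omega
  simpa [← hspan, totalLevel] using le_span_of_forall_ne f _ _ _ hgap hends

end Radio
end

section
/- Let T be an m-vertex tree with diameter d. Then rn(T) = (m-1)(d+1) + 1 - 2w(T) holds if and only if for every weight center w* of T, there exists a radio labeling f of T with ordering u_0, u_1, ..., u_{m-1} of the vertices satisfying 0 = f(u_0) < f(u_1) < ... < f(u_{m-1}) such that for all 0 ≤ i ≤ m-2: (1) u_i and u_{i+1} are in different branches of T rooted at w* (unless one of them is w*); (2) {u_0, u_{m-1}} = {w*, v} for some vertex v with L_{w*}(v) = 1; and (3) f(u_{i+1}) = f(u_i) + d + 1 - L_{w*}(u_i) - L_{w*}(u_{i+1}). -/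
namespace Radio

variable {V : Type*}

/-- In a tree rooted at `w`, two vertices `x` and `y` lie in *different branches* at `w`
exactly when `w` lies on the unique `x`–`y` path, i.e. `d(x,y) = d(x,w) + d(w,y)`. -/
def InDifferentBranches [Fintype V] (G : SimpleGraph V) (w x y : V) : Prop :=
  G.dist x y = G.dist x w + G.dist w y

section Helpers
variable [Fintype V] {G : SimpleGraph V}




lemma ediam_ne_top' (hc : G.Connected) : G.ediam ≠ ⊤ := by
  have : Nonempty V := hc.nonempty
  obtain ⟨u, v, huv⟩ := G.exists_edist_eq_ediam_of_finite
  rw [← huv]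
  exact SimpleGraph.edist_ne_top_iff_reachable.mpr (hc.preconnected u v)

lemma dist_le_diam' (hc : G.Connected) (u v : V) : G.dist u v ≤ G.diam :=
  SimpleGraph.dist_le_diam (ediam_ne_top' hc)

lemma radio_injective (hc : G.Connected) {f : V → ℕ} (hf : IsRadioLabeling G f) :
    Function.Injective f := by
  intro u v h
  by_contra hne
  have h1 := hf u v hne
  have h2 := dist_le_diam' hc u v
  rw [h] at h1
  simp at h1
  omega

lemma span_eq_of_minmax {f : V → ℕ} (a b : V)
    (hmin : ∀ v, f a ≤ f v) (hmax : ∀ v, f v ≤ f b) :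
    (span f : ℤ) = (f b : ℤ) - (f a : ℤ) := by
  have h1 : span f ≤ f b - f a := by
    apply Finset.sup_le
    intro p _
    have := hmin p.1; have := hmin p.2; have := hmax p.1; have := hmax p.2
    omega
  have h2 : (((f b : ℤ) - (f a : ℤ)).natAbs : ℕ) ≤ span f :=
    Finset.le_sup (f := fun p : V × V => ((f p.1 : ℤ) - (f p.2 : ℤ)).natAbs)
      (Finset.mem_univ (b, a))
  have := hmin b
  omega

lemma exists_radio (hc : G.Connected) : ∃ f : V → ℕ, IsRadioLabeling G f := by
  have : Nonempty V := hc.nonempty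
  classical
  let e := Fintype.equivFin V
  refine ⟨fun v => (e v : ℕ) * (G.diam + 1), fun a b hab => ?_⟩
  have hne : (e a : ℕ) ≠ (e b : ℕ) := fun h => hab (e.injective (Fin.ext h))
  have key : G.diam + 1 ≤
      ((((e a : ℕ) * (G.diam + 1) : ℕ) : ℤ) - (((e b : ℕ) * (G.diam + 1) : ℕ) : ℤ)).natAbs := by
    have h1 : (((e a : ℕ) * (G.diam + 1) : ℕ) : ℤ) - (((e b : ℕ) * (G.diam + 1) : ℕ) : ℤ)
        = (((e a : ℕ) : ℤ) - ((e b : ℕ) : ℤ)) * ((G.diam : ℤ) + 1) := by push_cast; ring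
    rw [h1, Int.natAbs_mul]
    have h2 : 1 ≤ (((e a : ℕ) : ℤ) - ((e b : ℕ) : ℤ)).natAbs := by omega
    have h3 : ((G.diam : ℤ) + 1).natAbs = G.diam + 1 := by omega
    rw [h3]
    calc G.diam + 1 = 1 * (G.diam + 1) := (one_mul _).symm
      _ ≤ _ := Nat.mul_le_mul_right _ h2
  dsimp only
  omega




lemma exists_sorted_enum {f : V → ℕ} (hinj : Function.Injective f) [Nonempty V] :
    ∃ u : ℕ → V,
      (∀ v : V, ∃! i : ℕ, i < Fintype.card V ∧ u i = v) ∧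
      (∀ i j : ℕ, i < j → j < Fintype.card V → f (u i) < f (u j)) ∧
      (∀ v : V, f (u 0) ≤ f v ∧ f v ≤ f (u (Fintype.card V - 1))) := by
  classical
  set m := Fintype.card V with hmdef
  have hm1 : 1 ≤ m := Fintype.card_pos
  have hcard : (Finset.univ.image f).card = m := by
    rw [Finset.card_image_of_injective _ hinj, Finset.card_univ]
  have hmem : ∀ i : Fin m, ∃ v : V, f v = (Finset.univ.image f).orderEmbOfFin hcard i := by
    intro i
    have h := Finset.orderEmbOfFin_mem (Finset.univ.image f) hcard i
    obtain ⟨v, -, hv⟩ := Finset.mem_image.mp h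
    exact ⟨v, hv⟩
  choose e he using hmem
  have hfe : StrictMono fun i => f (e i) := by
    intro i j hij
    simp only [he]
    exact ((Finset.univ.image f).orderEmbOfFin hcard).strictMono hij
  have einj : Function.Injective e := by
    intro i j h
    exact hfe.injective (by simp [h])
  have esurj : Function.Surjective e := by
    have : Function.Bijective e :=
      (Fintype.bijective_iff_injective_and_card e).mpr ⟨einj, by simp [hmdef]⟩
    exact this.2
  refine ⟨fun i => e ⟨min i (m - 1), by omega⟩, ?_, ?_, ?_⟩
  · intro v
    obtain ⟨i, rfl⟩ := esurj v
    refine ⟨i.val, ⟨i.isLt, ?_⟩, ?_⟩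
    · dsimp only
      congr 1
      have hi := i.isLt
      apply Fin.ext
      show min i.val (m - 1) = i.val
      omega
    · rintro j ⟨hj, hj2⟩
      have := einj hj2
      have h3 : min j (m - 1) = i.val := congrArg Fin.val this
      omega
  · intro i j hij hjm
    apply hfe
    rw [Fin.lt_def]
    simp
    omega
  · intro v
    obtain ⟨i, rfl⟩ := esurj v
    constructor
    · apply hfe.monotone
      rw [Fin.le_def]
      simp
    · apply hfe.monotone
      rw [Fin.le_def]
      simp
      omega

lemma sum_shift (d : ℤ) (L : ℕ → ℤ) (k : ℕ) :
    ∑ i ∈ Finset.range k, (d - L i - L (i + 1))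
      = k * d - 2 * (∑ i ∈ Finset.range (k + 1), L i) + L 0 + L k := by
  have h1 : ∑ i ∈ Finset.range k, L i = (∑ i ∈ Finset.range (k + 1), L i) - L k := by
    rw [Finset.sum_range_succ]; ring
  have h2 : ∑ i ∈ Finset.range k, L (i + 1) = (∑ i ∈ Finset.range (k + 1), L i) - L 0 := by
    rw [Finset.sum_range_succ']; ring
  rw [Finset.sum_sub_distrib, Finset.sum_sub_distrib, Finset.sum_const, h1, h2,
    Finset.card_range, nsmul_eq_mul]
  ring




lemma sum_dist_eq_weightFrom (w : V) {u : ℕ → V}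
    (hu : ∀ v : V, ∃! i : ℕ, i < Fintype.card V ∧ u i = v) :
    ∑ i ∈ Finset.range (Fintype.card V), (G.dist w (u i) : ℤ) = (weightFrom G w : ℤ) := by
  rw [weightFrom]
  push_cast
  refine Finset.sum_bij (fun i _ => u i) ?_ ?_ ?_ ?_
  · intro i _; exact Finset.mem_univ _
  · intro i hi j hj hij
    obtain ⟨k, -, hk⟩ := hu (u i)
    have h1 := hk i ⟨Finset.mem_range.mp hi, rfl⟩
    have h2 := hk j ⟨Finset.mem_range.mp hj, hij.symm⟩
    omega
  · intro v _
    obtain ⟨i, ⟨hi, hiv⟩, -⟩ := hu v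
    exact ⟨i, Finset.mem_range.mpr hi, hiv⟩
  · intro i _
    rw [SimpleGraph.dist_comm]


lemma lower_bound (hc : G.Connected) (hm : 2 ≤ Fintype.card V) (w : V)
    {f : V → ℕ} (hf : IsRadioLabeling G f) :
    ((Fintype.card V : ℤ) - 1) * ((G.diam : ℤ) + 1) + 1 - 2 * (weightFrom G w : ℤ)
      ≤ (span f : ℤ) := by
  have : Nonempty V := hc.nonempty
  set m := Fintype.card V with hmdef
  obtain ⟨u, hu, hmono, hminmax⟩ := exists_sorted_enum (radio_injective hc hf)
  have hgap : ∀ i ∈ Finset.range (m - 1),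
      (G.diam : ℤ) + 1 - (G.dist w (u i) : ℤ) - (G.dist w (u (i + 1)) : ℤ)
        ≤ (f (u (i + 1)) : ℤ) - (f (u i) : ℤ) := by
    intro i hi
    rw [Finset.mem_range] at hi
    have hlt : f (u i) < f (u (i + 1)) := hmono i (i + 1) (by omega) (by omega)
    have hne : u i ≠ u (i + 1) := fun h => by rw [h] at hlt; omega
    have h1 := hf (u i) (u (i + 1)) hne
    have h2 : G.dist (u i) (u (i + 1)) ≤ G.dist (u i) w + G.dist w (u (i + 1)) :=
      hc.dist_triangle
    have h3 : G.dist (u i) w = G.dist w (u i) := SimpleGraph.dist_comm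
    omega
  have hsum := Finset.sum_le_sum hgap
  rw [Finset.sum_range_sub (fun i => (f (u i) : ℤ))] at hsum
  have hlev := sum_shift ((G.diam : ℤ) + 1) (fun i => (G.dist w (u i) : ℤ)) (m - 1)
  rw [show m - 1 + 1 = m by omega] at hlev
  rw [sum_dist_eq_weightFrom w hu] at hlev
  rw [hlev] at hsum
  rw [show ((m - 1 : ℕ) : ℤ) = (m : ℤ) - 1 by omega] at hsum
  have hone : (1 : ℤ) ≤ (G.dist w (u 0) : ℤ) + (G.dist w (u (m - 1)) : ℤ) := by
    have hne : u 0 ≠ u (m - 1) := by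
      have hlt := hmono 0 (m - 1) (by omega) (by omega)
      intro h; rw [h] at hlt; omega
    by_contra hcon
    push_neg at hcon
    have e0 : G.dist w (u 0) = 0 := by omega
    have e1 : G.dist w (u (m - 1)) = 0 := by omega
    have h0 := (hc.dist_eq_zero_iff).mp e0
    have h1' := (hc.dist_eq_zero_iff).mp e1
    exact hne (by rw [← h0, ← h1'])
  have hspan := span_eq_of_minmax (u 0) (u (m - 1))
    (fun v => (hminmax v).1) (fun v => (hminmax v).2)
  linarith

lemma exists_weightCenter (G : SimpleGraph V) [Nonempty V] :
    ∃ w : V, w ∈ weightCenters G := by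
  classical
  obtain ⟨w, -, hw⟩ := Finset.exists_min_image Finset.univ (weightFrom G)
    ⟨Classical.arbitrary V, Finset.mem_univ _⟩
  exact ⟨w, fun x => hw x (Finset.mem_univ x)⟩

lemma weight_eq_weightFrom {w : V} (hw : w ∈ weightCenters G) :
    weight G = weightFrom G w := by
  apply le_antisymm
  · exact Nat.sInf_le ⟨w, rfl⟩
  · apply le_csInf (⟨weightFrom G w, w, rfl⟩ : (Set.range (weightFrom G)).Nonempty)
    rintro n ⟨x, rfl⟩
    exact hw x

lemma mono_of_consec {f : V → ℕ} {u : ℕ → V} {m : ℕ}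
    (h : ∀ i : ℕ, i ≤ m - 2 → f (u i) < f (u (i + 1))) :
    ∀ i j : ℕ, i ≤ j → j ≤ m - 1 → f (u i) ≤ f (u j) := by
  intro i j hij hj
  induction j with
  | zero =>
    have : i = 0 := by omega
    subst this; exact le_refl _
  | succ k ih =>
    rcases Nat.eq_or_lt_of_le hij with rfl | hlt
    · exact le_refl _
    · have h1 : f (u i) ≤ f (u k) := ih (by omega) (by omega)
      have h2 : f (u k) < f (u (k + 1)) := h k (by omega)
      omega

end Helpers

/-- Liu's characterization.
For an `m`-vertex tree `T` with diameter `d`, `rn(T) = (m-1)(d+1) + 1 - 2 w(T)` holds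
iff for every weight center `w*` there is a radio labeling `f` with an ordering
`u 0, …, u (m-1)` of the vertices, `0 = f(u 0) < f(u 1) < ⋯ < f(u (m-1))`, such that
for all `0 ≤ i ≤ m-2`: (1) `u i` and `u (i+1)` are in different branches unless one of
them is `w*`; (2) `{u 0, u (m-1)} = {w*, v}` for some `v` with `L_{w*}(v) = 1`;
(3) `f(u (i+1)) = f(u i) + d + 1 - L_{w*}(u i) - L_{w*}(u (i+1))`. -/
theorem radioNumber_tree_eq_iff_liu {V : Type*} [Fintype V]
    (G : SimpleGraph V) (hT : G.IsTree) :
    (radioNumber G : ℤ) =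
        ((Fintype.card V : ℤ) - 1) * ((G.diam : ℤ) + 1) + 1 - 2 * (weight G : ℤ) ↔
      ∀ w : V, w ∈ weightCenters G →
        ∃ (f : V → ℕ) (u : ℕ → V),
          IsRadioLabeling G f ∧
          (∀ v : V, ∃! i : ℕ, i < Fintype.card V ∧ u i = v) ∧
          f (u 0) = 0 ∧
          (∀ i : ℕ, i ≤ Fintype.card V - 2 → f (u i) < f (u (i + 1))) ∧
          -- (1)
          (∀ i : ℕ, i ≤ Fintype.card V - 2 →
            u i = w ∨ u (i + 1) = w ∨ InDifferentBranches G w (u i) (u (i + 1))) ∧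
          -- (2)
          (∃ v : V, G.dist w v = 1 ∧
            ({u 0, u (Fintype.card V - 1)} : Set V) = {w, v}) ∧
          -- (3)
          (∀ i : ℕ, i ≤ Fintype.card V - 2 →
            (f (u (i + 1)) : ℤ) =
              (f (u i) : ℤ) + (G.diam : ℤ) + 1
                - (G.dist w (u i) : ℤ) - (G.dist w (u (i + 1)) : ℤ)) := by
  classical
  have hc := hT.isConnected
  have hne : Nonempty V := hc.nonempty
  set m := Fintype.card V with hmdef
  have hm1 : 1 ≤ m := Fintype.card_pos
  constructor
  · -- forward direction
    intro h w hw
    rcases Nat.eq_or_lt_of_le hm1 with hm1' | hm2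
    · -- m = 1 : contradiction
      exfalso
      have hsub : Subsingleton V := Fintype.card_le_one_iff_subsingleton.mp (by omega)
      have hdiam : G.diam = 0 := by
        rw [SimpleGraph.diam, SimpleGraph.ediam_eq_zero_of_subsingleton]
        rfl
      have hweight : weight G = 0 := by
        apply Nat.sInf_eq_zero.mpr
        left
        refine ⟨Classical.arbitrary V, ?_⟩
        rw [weightFrom]
        apply Finset.sum_eq_zero
        intro x _
        rw [Subsingleton.elim x (Classical.arbitrary V), SimpleGraph.dist_self]
      have hrn : radioNumber G = 0 := by
        apply Nat.sInf_eq_zero.mpr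
        left
        refine ⟨fun _ => 0, fun a b hab => absurd (Subsingleton.elim a b) hab, ?_⟩
        apply Nat.le_antisymm _ (Nat.zero_le _)
        apply Finset.sup_le
        intro p _
        simp
      rw [hrn, hdiam, hweight] at h
      rw [show (m : ℤ) = 1 by omega] at h
      norm_num at h
    · -- m ≥ 2
      -- optimal labeling
      have hSne : {n | ∃ f : V → ℕ, IsRadioLabeling G f ∧ span f = n}.Nonempty := by
        obtain ⟨f, hf⟩ := exists_radio hc
        exact ⟨span f, f, hf, rfl⟩
      obtain ⟨f0, hf0, hspan0⟩ := Nat.sInf_mem hSne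
      -- shift down by the minimum
      obtain ⟨v0, -, hminv0⟩ := Finset.exists_min_image Finset.univ f0
        ⟨Classical.arbitrary V, Finset.mem_univ _⟩
      have hmin : ∀ x : V, f0 v0 ≤ f0 x := fun x => hminv0 x (Finset.mem_univ x)
      set f : V → ℕ := fun v => f0 v - f0 v0 with hfdef
      have hfcast : ∀ v : V, (f v : ℤ) = (f0 v : ℤ) - (f0 v0 : ℤ) := by
        intro v
        have := hmin v
        simp only [hfdef]
        omega
      have hfrl : IsRadioLabeling G f := by
        intro a b hab
        have h1 := hf0 a b hab
        have h2 := hfcast a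
        have h3 := hfcast b
        omega
      have hspanf : span f = radioNumber G := by
        have hrn_def : radioNumber G
            = sInf {n | ∃ f : V → ℕ, IsRadioLabeling G f ∧ span f = n} := rfl
        rw [hrn_def, ← hspan0, span, span]
        apply Finset.sup_congr rfl
        intro p _
        have h2 := hfcast p.1
        have h3 := hfcast p.2
        omega
      obtain ⟨u, hu, hmono, hminmax⟩ := exists_sorted_enum (radio_injective hc hfrl)
      have hf_u0 : f (u 0) = 0 := by
        have h1 := (hminmax v0).1
        have h2 : f v0 = 0 := by simp [hfdef]
        omega
      have hspan := span_eq_of_minmax (u 0) (u (m - 1))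
        (fun v => (hminmax v).1) (fun v => (hminmax v).2)
      have hW : weight G = weightFrom G w := weight_eq_weightFrom hw
      -- gap facts
      have hgap : ∀ i, i < m - 1 →
          (G.diam : ℤ) + 1 ≤ (G.dist (u i) (u (i + 1)) : ℤ)
              + ((f (u (i + 1)) : ℤ) - (f (u i) : ℤ)) ∧
          (G.dist (u i) (u (i + 1)) : ℤ)
              ≤ (G.dist w (u i) : ℤ) + (G.dist w (u (i + 1)) : ℤ) ∧
          f (u i) < f (u (i + 1)) := by
        intro i hi
        have hlt : f (u i) < f (u (i + 1)) := hmono i (i + 1) (by omega) (by omega)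
        have hneq : u i ≠ u (i + 1) := fun hh => by rw [hh] at hlt; omega
        have h1 := hfrl (u i) (u (i + 1)) hneq
        have h2 : G.dist (u i) (u (i + 1)) ≤ G.dist (u i) w + G.dist w (u (i + 1)) :=
          hc.dist_triangle
        have h3 : G.dist (u i) w = G.dist w (u i) := SimpleGraph.dist_comm
        refine ⟨by omega, by omega, hlt⟩
      -- slack terms
      set g : ℕ → ℤ := fun i =>
        ((f (u (i + 1)) : ℤ) - (f (u i) : ℤ))
          - ((G.diam : ℤ) + 1 - (G.dist w (u i) : ℤ) - (G.dist w (u (i + 1)) : ℤ)) with hgdef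
      have hg_nonneg : ∀ i ∈ Finset.range (m - 1), 0 ≤ g i := by
        intro i hi
        rw [Finset.mem_range] at hi
        obtain ⟨a1, a2, -⟩ := hgap i hi
        simp only [hgdef]
        omega
      have hlev := sum_shift ((G.diam : ℤ) + 1) (fun i => (G.dist w (u i) : ℤ)) (m - 1)
      rw [show m - 1 + 1 = m by omega] at hlev
      rw [sum_dist_eq_weightFrom w hu] at hlev
      rw [show ((m - 1 : ℕ) : ℤ) = (m : ℤ) - 1 by omega] at hlev
      have hg_sum : ∑ i ∈ Finset.range (m - 1), g i
          = 1 - (G.dist w (u 0) : ℤ) - (G.dist w (u (m - 1)) : ℤ) := by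
        simp only [hgdef]
        rw [Finset.sum_sub_distrib, Finset.sum_range_sub (fun i => (f (u i) : ℤ)), hlev]
        have hval : (f (u (m - 1)) : ℤ) - (f (u 0) : ℤ)
            = ((m : ℤ) - 1) * ((G.diam : ℤ) + 1) + 1 - 2 * (weightFrom G w : ℤ) := by
          rw [← hspan, hspanf, h, hW]
        rw [hval]
        ring
      have hone : (1 : ℤ) ≤ (G.dist w (u 0) : ℤ) + (G.dist w (u (m - 1)) : ℤ) := by
        have hneq : u 0 ≠ u (m - 1) := by
          have hlt := hmono 0 (m - 1) (by omega) (by omega)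
          intro hh; rw [hh] at hlt; omega
        by_contra hcon
        push_neg at hcon
        have e0 : G.dist w (u 0) = 0 := by omega
        have e1 : G.dist w (u (m - 1)) = 0 := by omega
        have h0 := (hc.dist_eq_zero_iff).mp e0
        have h1' := (hc.dist_eq_zero_iff).mp e1
        exact hneq (by rw [← h0, ← h1'])
      have hsum_nonneg : 0 ≤ ∑ i ∈ Finset.range (m - 1), g i :=
        Finset.sum_nonneg hg_nonneg
      have hL1 : (G.dist w (u 0) : ℤ) + (G.dist w (u (m - 1)) : ℤ) = 1 := by omega
      have hg_zero : ∀ i ∈ Finset.range (m - 1), g i = 0 := by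
        intro i hi
        have hzero : ∑ i ∈ Finset.range (m - 1), g i = 0 := by omega
        have := (Finset.sum_eq_zero_iff_of_nonneg hg_nonneg).mp hzero
        exact this i hi
      refine ⟨f, u, hfrl, hu, hf_u0, ?_, ?_, ?_, ?_⟩
      · intro i hi
        exact hmono i (i + 1) (by omega) (by omega)
      · -- condition (1)
        intro i hi
        right; right
        obtain ⟨a1, a2, -⟩ := hgap i (by omega)
        have hz := hg_zero i (Finset.mem_range.mpr (by omega))
        simp only [hgdef] at hz
        have h3 : G.dist (u i) w = G.dist w (u i) := SimpleGraph.dist_comm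
        rw [InDifferentBranches]
        omega
      · -- condition (2)
        by_cases h0 : G.dist w (u 0) = 0
        · have heq := (hc.dist_eq_zero_iff).mp h0
          refine ⟨u (m - 1), by omega, ?_⟩
          rw [← heq]
        · have e1 : G.dist w (u (m - 1)) = 0 := by omega
          have heq := (hc.dist_eq_zero_iff).mp e1
          refine ⟨u 0, by omega, ?_⟩
          rw [← heq, Set.pair_comm]
      · -- condition (3)
        intro i hi
        have hz := hg_zero i (Finset.mem_range.mpr (by omega))
        simp only [hgdef] at hz
        omega
  · -- backward direction
    intro h
    obtain ⟨w, hw⟩ := exists_weightCenter G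
    obtain ⟨f, u, hfrl, hu, hf0, hinc, -, ⟨v, hv1, hv2⟩, h3⟩ := h w hw
    have hwv : w ≠ v := by
      intro hh
      rw [hh, SimpleGraph.dist_self] at hv1
      omega
    have hm2 : 2 ≤ m := Fintype.one_lt_card_iff_nontrivial.mpr ⟨w, v, hwv⟩
    -- L0 + L(m-1) = 1
    have hL : G.dist w (u 0) + G.dist w (u (m - 1)) = 1 := by
      have h1 : u 0 ∈ ({w, v} : Set V) := by
        rw [← hv2]; exact Set.mem_insert _ _
      have h2 : u (m - 1) ∈ ({w, v} : Set V) := by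
        rw [← hv2]; exact Set.mem_insert_iff.mpr (Or.inr rfl)
      have h4 : v ∈ ({u 0, u (m - 1)} : Set V) := by
        rw [hv2]; exact Set.mem_insert_iff.mpr (Or.inr rfl)
      simp only [Set.mem_insert_iff, Set.mem_singleton_iff] at h1 h2 h4
      rcases h1 with h1 | h1 <;> rcases h2 with h2 | h2
      · exfalso
        rcases h4 with h4 | h4
        · rw [h1] at h4; exact hwv h4.symm
        · rw [h2] at h4; exact hwv h4.symm
      · rw [h1, h2, SimpleGraph.dist_self, hv1]
      · rw [h1, h2, SimpleGraph.dist_self, hv1]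
      · exfalso
        have h5 : w ∈ ({u 0, u (m - 1)} : Set V) := by
          rw [hv2]; exact Set.mem_insert _ _
        simp only [Set.mem_insert_iff, Set.mem_singleton_iff] at h5
        rcases h5 with h5 | h5
        · rw [h1] at h5; exact hwv h5
        · rw [h2] at h5; exact hwv h5
    have hmono := mono_of_consec (m := m) hinc
    have hminmax : ∀ x : V, f (u 0) ≤ f x ∧ f x ≤ f (u (m - 1)) := by
      intro x
      obtain ⟨i, ⟨hi, rfl⟩, -⟩ := hu x
      exact ⟨hmono 0 i (by omega) (by omega), hmono i (m - 1) (by omega) (by omega)⟩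
    have hspan := span_eq_of_minmax (u 0) (u (m - 1))
      (fun x => (hminmax x).1) (fun x => (hminmax x).2)
    -- telescope
    have htel : ∑ i ∈ Finset.range (m - 1), ((f (u (i + 1)) : ℤ) - (f (u i) : ℤ))
        = ∑ i ∈ Finset.range (m - 1),
            ((G.diam : ℤ) + 1 - (G.dist w (u i) : ℤ) - (G.dist w (u (i + 1)) : ℤ)) := by
      apply Finset.sum_congr rfl
      intro i hi
      rw [Finset.mem_range] at hi
      have := h3 i (by omega)
      omega
    rw [Finset.sum_range_sub (fun i => (f (u i) : ℤ))] at htel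
    have hlev := sum_shift ((G.diam : ℤ) + 1) (fun i => (G.dist w (u i) : ℤ)) (m - 1)
    rw [show m - 1 + 1 = m by omega] at hlev
    rw [sum_dist_eq_weightFrom w hu] at hlev
    rw [show ((m - 1 : ℕ) : ℤ) = (m : ℤ) - 1 by omega] at hlev
    rw [hlev] at htel
    have hW : weight G = weightFrom G w := weight_eq_weightFrom hw
    have hspan_val : (span f : ℤ)
        = ((m : ℤ) - 1) * ((G.diam : ℤ) + 1) + 1 - 2 * (weight G : ℤ) := by
      rw [hspan, hW]
      have hLz : (G.dist w (u 0) : ℤ) + (G.dist w (u (m - 1)) : ℤ) = 1 := by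
        exact_mod_cast congrArg (Nat.cast : ℕ → ℤ) hL
      have hfz : (f (u 0) : ℤ) = 0 := by exact_mod_cast hf0
      linarith [htel]
    -- upper bound
    have hub : radioNumber G ≤ span f := Nat.sInf_le ⟨f, hfrl, rfl⟩
    -- lower bound
    have hSne : {n | ∃ f : V → ℕ, IsRadioLabeling G f ∧ span f = n}.Nonempty :=
      ⟨span f, f, hfrl, rfl⟩
    obtain ⟨f', hf', hspan'⟩ := Nat.sInf_mem hSne
    have hspan'' : span f' = radioNumber G := hspan'
    have hub' : (radioNumber G : ℤ)
        ≤ ((m : ℤ) - 1) * ((G.diam : ℤ) + 1) + 1 - 2 * (weight G : ℤ) := by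
      rw [← hspan_val]; exact_mod_cast hub
    have hlb' : ((m : ℤ) - 1) * ((G.diam : ℤ) + 1) + 1 - 2 * (weight G : ℤ)
        ≤ (radioNumber G : ℤ) := by
      calc ((m : ℤ) - 1) * ((G.diam : ℤ) + 1) + 1 - 2 * (weight G : ℤ)
          ≤ (span f' : ℤ) := by rw [hW]; exact lower_bound hc hm2 w hf'
        _ = (radioNumber G : ℤ) := by exact_mod_cast congrArg (Nat.cast : ℕ → ℤ) hspan''
    linarith

end Radio
end

section
/- Let T be a tree of order n_0 with a chosen weight center, and let T_{D_k} be the tree obtained by taking 2k copies of T and identifying the weight center of each copy with a distinct leaf of a k-double star whose two central vertices are w and w'. Then T_{D_k} has exactly two weight centers, namely the adjacent vertices w and w' (so W(T_{D_k}) = {w, w'}), and |V(T_{D_k})| = 2(k n_0 + 1). -/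
/-!
If every edge leaving a vertex set `A` ends at a vertex `s`, then every path from `A` to its
complement passes through `s`. Hence moving from `s` to some `x ∈ A` increases the distance to
each of the `|Aᶜ|` outside vertices by exactly `d(s, x)` and decreases the distance to each of
the `|A|` vertices of `A` by at most `d(s, x)`. In `T_{D_k}` each copy of `T` has `n₀` vertices,
fewer than half of all vertices, and is left only through its centre `c` or `c'`, so every
vertex of a copy is heavier than that centre; the two sides of the central edge `cc'` have
`k n₀ + 1` vertices each, so `c` and `c'` weigh the same.
-/

namespace Radio

variable {V : Type*}

open Finset

section Cut

variable {G : SimpleGraph V} {A : Set V} {s x y : V}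

theorem _root_.SimpleGraph.Walk.mem_support_of_cut (hcut : ∀ a ∈ A, ∀ b ∉ A, G.Adj a b → b = s)
    (p : G.Walk x y) (hx : x ∈ A) (hy : y ∉ A) : s ∈ p.support := by
  obtain ⟨d, hd, hd₁, hd₂⟩ := p.exists_boundary_dart A hx hy
  rw [← hcut _ hd₁ _ hd₂ d.adj]
  exact p.dart_snd_mem_support_of_mem_darts hd

theorem _root_.SimpleGraph.Connected.dist_eq_add_of_cut (hG : G.Connected)
    (hcut : ∀ a ∈ A, ∀ b ∉ A, G.Adj a b → b = s) (hx : x ∈ A) (hy : y ∉ A) :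
    G.dist x y = G.dist x s + G.dist s y := by
  classical
  obtain ⟨p, hp⟩ := hG.exists_walk_length_eq_dist x y
  refine le_antisymm hG.dist_triangle ?_
  rw [← hp, ← p.take_spec (p.mem_support_of_cut hcut hx hy), SimpleGraph.Walk.length_append]
  exact add_le_add (SimpleGraph.dist_le _) (SimpleGraph.dist_le _)

end Cut

section Weight

variable [Fintype V] [DecidableEq V] {G : SimpleGraph V}

theorem weightFrom_add_le_of_cut (hG : G.Connected) {A : Finset V} {s x : V}
    (hcut : ∀ a ∈ A, ∀ b ∉ A, G.Adj a b → b = s) (hx : x ∈ A) :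
    weightFrom G s + #Aᶜ * G.dist s x ≤ weightFrom G x + #A * G.dist s x := by
  have hin : ∀ y ∈ A, G.dist y s ≤ G.dist y x + G.dist s x := fun y _ => by
    rw [G.dist_comm (u := s)]
    exact hG.dist_triangle
  have hout : ∀ y ∈ Aᶜ, G.dist y s + G.dist s x = G.dist y x := fun y hy => by
    rw [G.dist_comm (u := y), G.dist_comm (u := y),
      hG.dist_eq_add_of_cut (A := A) hcut hx (by simpa using hy), G.dist_comm (u := x),
      add_comm]
  have h₁ := sum_le_sum hin
  have h₂ := sum_congr rfl hout
  rw [sum_add_distrib, sum_const, smul_eq_mul] at h₁ h₂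
  rw [weightFrom, weightFrom, ← sum_add_sum_compl A, ← sum_add_sum_compl A (G.dist · x)]
  linarith

theorem weightFrom_eq_of_cut (hG : G.Connected) {A : Finset V} {s t : V}
    (hcut : ∀ a ∈ A, ∀ b ∉ A, G.Adj a b → a = t ∧ b = s) (ht : t ∈ A) (hs : s ∉ A)
    (hcard : #A = #Aᶜ) : weightFrom G s = weightFrom G t := by
  have h₁ := weightFrom_add_le_of_cut hG (fun a ha b hb hab => (hcut a ha b hb hab).2) ht
  have h₂ := weightFrom_add_le_of_cut hG (A := Aᶜ)
    (fun a ha b hb hab => (hcut b (by simpa using hb) a (by simpa using ha) hab.symm).1)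
    (mem_compl.2 hs)
  rw [compl_compl, G.dist_comm, ← hcard] at h₂
  rw [← hcard] at h₁
  omega

end Weight

structure IsDoubleStarGluing {W : Type*} {k : ℕ} (T : SimpleGraph V) (w : V)
    (H : SimpleGraph W) (c c' : W) (φ : Fin k ⊕ Fin k → V → W) : Prop where
  ne : c ≠ c'
  injective : ∀ i, Function.Injective (φ i)
  ne_center : ∀ i v, φ i v ≠ c ∧ φ i v ≠ c'
  disjoint : ∀ i j, i ≠ j → ∀ a b, φ i a ≠ φ j b
  cover : ∀ x : W, x = c ∨ x = c' ∨ ∃ i v, φ i v = x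
  adj_iff : ∀ x y : W, H.Adj x y ↔
    (∃ i a b, φ i a = x ∧ φ i b = y ∧ T.Adj a b) ∨
    ((x = c ∧ y = c') ∨ (x = c' ∧ y = c)) ∨
    (∃ i : Fin k, (x = c ∧ y = φ (Sum.inl i) w) ∨ (x = φ (Sum.inl i) w ∧ y = c)) ∨
    (∃ i : Fin k, (x = c' ∧ y = φ (Sum.inr i) w) ∨ (x = φ (Sum.inr i) w ∧ y = c'))

namespace IsDoubleStarGluing

variable {W : Type*} {k : ℕ} {T : SimpleGraph V} {w : V} {H : SimpleGraph W} {c c' : W}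
  {φ : Fin k ⊕ Fin k → V → W}

def hub (c c' : W) : Fin k ⊕ Fin k → W := Sum.elim (fun _ => c) (fun _ => c')

theorem index_eq (hD : IsDoubleStarGluing T w H c c' φ) {i j : Fin k ⊕ Fin k} {a b : V}
    (h : φ i a = φ j b) : i = j :=
  by_contra fun hij => hD.disjoint i j hij a b h

theorem adj_center (hD : IsDoubleStarGluing T w H c c' φ) : H.Adj c c' :=
  (hD.adj_iff _ _).2 (Or.inr (Or.inl (Or.inl ⟨rfl, rfl⟩)))

theorem adj_hub (hD : IsDoubleStarGluing T w H c c' φ) (i : Fin k ⊕ Fin k) :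
    H.Adj (hub c c' i) (φ i w) := by
  rcases i with i | i
  · exact (hD.adj_iff _ _).2 (Or.inr (Or.inr (Or.inl ⟨i, Or.inl ⟨rfl, rfl⟩⟩)))
  · exact (hD.adj_iff _ _).2 (Or.inr (Or.inr (Or.inr ⟨i, Or.inl ⟨rfl, rfl⟩⟩)))

def copyHom (hD : IsDoubleStarGluing T w H c c' φ) (i : Fin k ⊕ Fin k) : T →g H where
  toFun := φ i
  map_rel' h := (hD.adj_iff _ _).2 (Or.inl ⟨i, _, _, rfl, rfl, h⟩)

theorem connected (hD : IsDoubleStarGluing T w H c c' φ) (hT : T.Connected) :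
    H.Connected := by
  have hc : ∀ x, H.Reachable c x := by
    intro x
    rcases hD.cover x with rfl | rfl | ⟨i, v, rfl⟩
    · rfl
    · exact hD.adj_center.reachable
    · have hhub : H.Reachable c (hub c c' i) := by
        rcases i with i | i
        · rfl
        · exact hD.adj_center.reachable
      exact hhub.trans ((hD.adj_hub i).reachable.trans ((hT w v).map (hD.copyHom i)))
  have : Nonempty W := ⟨c⟩
  exact ⟨fun x y => (hc x).symm.trans (hc y)⟩

theorem card_eq [Fintype V] [Fintype W] (hD : IsDoubleStarGluing T w H c c' φ) :
    Fintype.card W = 2 * (k * Fintype.card V + 1) := by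
  let f : ((Fin k ⊕ Fin k) × V) ⊕ Bool → W :=
    Sum.elim (fun p => φ p.1 p.2) fun b => bif b then c else c'
  have hf : f.Bijective := by
    refine ⟨?_, fun x => ?_⟩
    · rintro (⟨i, a⟩ | _ | _) (⟨j, b⟩ | _ | _) h <;>
        simp only [f, Sum.elim_inl, Sum.elim_inr, cond_true, cond_false] at h
      · obtain rfl := hD.index_eq h
        rw [hD.injective i h]
      all_goals grind [hD.ne, hD.ne_center]
    · rcases hD.cover x with rfl | rfl | ⟨i, v, rfl⟩
      exacts [⟨Sum.inr true, rfl⟩, ⟨Sum.inr false, rfl⟩, ⟨Sum.inl (i, v), rfl⟩]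
  rw [← Fintype.card_congr (Equiv.ofBijective f hf)]
  simp only [Fintype.card_sum, Fintype.card_prod, Fintype.card_bool, Fintype.card_fin]
  ring

theorem eq_hub_of_adj [Fintype V] [DecidableEq W] (hD : IsDoubleStarGluing T w H c c' φ)
    {i : Fin k ⊕ Fin k} {a b : W} (ha : a ∈ univ.image (φ i)) (hb : b ∉ univ.image (φ i))
    (hab : H.Adj a b) : b = hub c c' i := by
  simp only [mem_image, mem_univ, true_and] at ha hb
  obtain ⟨a, rfl⟩ := ha
  rcases i with i | i <;> simp only [hub, Sum.elim_inl, Sum.elim_inr] <;>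
    grind [hD.adj_iff, hD.ne_center, hD.disjoint]

section RightSide

variable [Fintype V] [DecidableEq W]

def rightSide (c' : W) (φ : Fin k ⊕ Fin k → V → W) : Finset W :=
  insert c' (univ.image fun p : Fin k × V => φ (Sum.inr p.1) p.2)

theorem eq_of_adj_rightSide (hD : IsDoubleStarGluing T w H c c' φ) {a b : W}
    (ha : a ∈ rightSide c' φ) (hb : b ∉ rightSide c' φ) (hab : H.Adj a b) : a = c' ∧ b = c := by
  simp only [rightSide, mem_insert, mem_image, mem_univ, true_and, Prod.exists] at ha hb
  grind [hD.adj_iff, hD.ne, hD.ne_center, hD.disjoint]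

theorem notMem_rightSide (hD : IsDoubleStarGluing T w H c c' φ) : c ∉ rightSide c' φ := by
  simp [rightSide, hD.ne, fun i v => (hD.ne_center i v).1]

theorem card_rightSide (hD : IsDoubleStarGluing T w H c c' φ) :
    #(rightSide c' φ) = k * Fintype.card V + 1 := by
  have hinj : Function.Injective fun p : Fin k × V => φ (Sum.inr p.1) p.2 := by
    rintro ⟨i, a⟩ ⟨j, b⟩ h
    obtain rfl := Sum.inr_injective (hD.index_eq h)
    exact congrArg _ (hD.injective _ h)
  rw [rightSide, card_insert_of_notMem, card_image_of_injective _ hinj, card_univ,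
    Fintype.card_prod, Fintype.card_fin]
  simp [fun i v => (hD.ne_center i v).2]

end RightSide

theorem weightFrom_left_eq_right [Fintype V] [Fintype W] (hD : IsDoubleStarGluing T w H c c' φ)
    (hH : H.Connected) : weightFrom H c = weightFrom H c' := by
  classical
  refine weightFrom_eq_of_cut hH (fun a ha b hb hab => hD.eq_of_adj_rightSide ha hb hab)
    (mem_insert_self _ _) hD.notMem_rightSide ?_
  rw [card_compl, hD.card_rightSide, hD.card_eq]
  omega

theorem weightFrom_hub_lt [Fintype V] [Fintype W] (hD : IsDoubleStarGluing T w H c c' φ)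
    (hH : H.Connected) (i : Fin k ⊕ Fin k) (u : V) :
    weightFrom H (hub c c' i) < weightFrom H (φ i u) := by
  classical
  have hcut := weightFrom_add_le_of_cut hH (fun a ha b hb hab => hD.eq_hub_of_adj ha hb hab)
    (mem_image_of_mem (φ i) (mem_univ u))
  rw [card_compl, card_image_of_injective _ (hD.injective i), card_univ,
    hD.card_eq] at hcut
  have hd : 0 < H.dist (hub c c' i) (φ i u) := by
    refine hH.pos_dist_of_ne fun h => ?_
    rcases i with i | i
    exacts [(hD.ne_center _ u).1 h.symm, (hD.ne_center _ u).2 h.symm]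
  set N := Fintype.card V
  set d := H.dist (hub c c' i) (φ i u)
  have hk : N ≤ k * N := Nat.le_mul_of_pos_left N (i.elim Fin.pos Fin.pos)
  have hlt : N * d < (2 * (k * N + 1) - N) * d := Nat.mul_lt_mul_of_pos_right (by omega) hd
  omega

theorem weightFrom_center_lt [Fintype V] [Fintype W] (hD : IsDoubleStarGluing T w H c c' φ)
    (hH : H.Connected) (i : Fin k ⊕ Fin k) (u : V) : weightFrom H c < weightFrom H (φ i u) := by
  rcases i with i | i
  · exact hD.weightFrom_hub_lt hH (Sum.inl i) u
  · exact hD.weightFrom_left_eq_right hH ▸ hD.weightFrom_hub_lt hH (Sum.inr i) u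

end IsDoubleStarGluing

theorem weightCenters_doubleStar_glue_general {V : Type*} [Fintype V]
    (T : SimpleGraph V) (w : V)
    (hTree : T.IsTree)
    {k : ℕ}
    {W : Type*} [Fintype W]
    (H : SimpleGraph W) (c c' : W) (hcc' : c ≠ c') (φ : Fin k ⊕ Fin k → V → W)
    (hinj : ∀ i, Function.Injective (φ i))
    (hc : ∀ i v, φ i v ≠ c ∧ φ i v ≠ c')
    (hdisj : ∀ i j, i ≠ j → ∀ a b, φ i a ≠ φ j b)
    (hcover : ∀ x : W, x = c ∨ x = c' ∨ ∃ i v, φ i v = x)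
    (hAdj : ∀ x y : W, H.Adj x y ↔
      (∃ i a b, φ i a = x ∧ φ i b = y ∧ T.Adj a b) ∨
      ((x = c ∧ y = c') ∨ (x = c' ∧ y = c)) ∨
      (∃ i : Fin k, (x = c ∧ y = φ (Sum.inl i) w) ∨ (x = φ (Sum.inl i) w ∧ y = c)) ∨
      (∃ i : Fin k, (x = c' ∧ y = φ (Sum.inr i) w) ∨ (x = φ (Sum.inr i) w ∧ y = c'))) :
    weightCenters H = {c, c'} ∧ H.Adj c c' ∧
    Fintype.card W = 2 * (k * Fintype.card V + 1) := by
  have hD : IsDoubleStarGluing T w H c c' φ := ⟨hcc', hinj, hc, hdisj, hcover, hAdj⟩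
  have hH := hD.connected hTree.connected
  have hcc := hD.weightFrom_left_eq_right hH
  have hmin : c ∈ weightCenters H := fun x => by
    rcases hcover x with rfl | rfl | ⟨i, u, rfl⟩
    exacts [le_rfl, hcc.le, (hD.weightFrom_center_lt hH i u).le]
  refine ⟨subset_antisymm (fun x hx => ?_) ?_, hD.adj_center, hD.card_eq⟩
  · rcases hcover x with rfl | rfl | ⟨i, u, rfl⟩
    · exact Or.inl rfl
    · exact Or.inr rfl
    · exact absurd (hx c) (hD.weightFrom_center_lt hH i u).not_ge
  · exact Set.insert_subset hmin (Set.singleton_subset_iff.2 fun x => hcc ▸ hmin x)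

/-- Let `T` be a tree of order `n₀` with a chosen weight center `w`, and
let `H = T_{D_k}` be the tree obtained by taking `2k` copies of `T` (indexed by
`Fin k ⊕ Fin k`) and identifying the weight center `w` of each copy with a distinct leaf
of a `k`-double star with adjacent central vertices `c, c'` (described here by injections
`φ i : T → H` with pairwise disjoint images avoiding `c, c'` which together with `c, c'`
cover `H`; the edges of `H` are the copies of the edges of `T`, the central edge
`c — c'`, and the pendant edges `c — φ (inl i) w` and `c' — φ (inr i) w`). Then `H` has
exactly the two adjacent weight centers `c` and `c'`, i.e. `W(H) = {c, c'}` with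
`c` adjacent to `c'`, and `|V(H)| = 2 (k n₀ + 1)`. -/
theorem weightCenters_doubleStar_glue {V : Type*} [Fintype V]
    (T : SimpleGraph V) (w : V)
    (hTree : T.IsTree)
    (hw : w ∈ weightCenters T)
    {k : ℕ} (hk : 1 ≤ k)
    {W : Type*} [Fintype W]
    (H : SimpleGraph W) (c c' : W) (hcc' : c ≠ c') (φ : Fin k ⊕ Fin k → V → W)
    (hinj : ∀ i, Function.Injective (φ i))
    (hc : ∀ i v, φ i v ≠ c ∧ φ i v ≠ c')
    (hdisj : ∀ i j, i ≠ j → ∀ a b, φ i a ≠ φ j b)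
    (hcover : ∀ x : W, x = c ∨ x = c' ∨ ∃ i v, φ i v = x)
    (hAdj : ∀ x y : W, H.Adj x y ↔
      (∃ i a b, φ i a = x ∧ φ i b = y ∧ T.Adj a b) ∨
      ((x = c ∧ y = c') ∨ (x = c' ∧ y = c)) ∨
      (∃ i : Fin k, (x = c ∧ y = φ (Sum.inl i) w) ∨ (x = φ (Sum.inl i) w ∧ y = c)) ∨
      (∃ i : Fin k, (x = c' ∧ y = φ (Sum.inr i) w) ∨ (x = φ (Sum.inr i) w ∧ y = c'))) :
    weightCenters H = {c, c'} ∧ H.Adj c c' ∧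
    Fintype.card W = 2 * (k * Fintype.card V + 1) :=
  weightCenters_doubleStar_glue_general T w hTree H c c' hcc' φ hinj hc hdisj hcover hAdj

end Radio
end
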